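/- Let μ > 0 and 0 < ξ ≤ ρ be real constants. Let ε : [0,∞) → ℝ be differentiable with ε(0) = 0, with ε' positive and nonincreasing, and suppose ξ ≤ ε'(t)·[1/μ + ∫_0^t exp(−ε(z)) dz] ≤ ρ for all t ≥ 0. Then inf_{t ≥ 0} ε'(t) > 0. -/

import Mathlib

/-!
With `F t = 1/μ + ∫₀ᵗ exp (-ε)`, we have `F' = exp (-ε)` and `(exp (-ε))' = -ε' exp (-ε)`, so
`F · exp (exp (-ε) / ξ)` has derivative `exp (-ε) exp (exp (-ε) / ξ) (1 - ε' F / ξ) ≤ 0` because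
`ξ ≤ ε' F`. Hence `F` stays below `F 0 · exp (exp (-ε 0) / ξ)`, and `ε' ≥ ξ / F` is bounded away
from `0`.
-/

open Set Real

theorem hasDerivWithinAt_integral_Ici {E : Type*} [NormedAddCommGroup E] [NormedSpace ℝ E]
    [CompleteSpace E] {g : ℝ → E} {a t : ℝ} (hg : ContinuousOn g (Ici a)) (ht : t ∈ Ici a) :
    HasDerivWithinAt (fun u => ∫ z in a..u, g z) (g t) (Ici a) t := by
  have hint : IntervalIntegrable g MeasureTheory.volume a t :=
    (hg.mono (uIcc_of_le (mem_Ici.mp ht) ▸ Icc_subset_Ici_self)).intervalIntegrable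
  rcases (mem_Ici.mp ht).eq_or_lt with rfl | hat
  · exact intervalIntegral.integral_hasDerivWithinAt_right hint
      ((hg.mono Ioi_subset_Ici_self).stronglyMeasurableAtFilter_nhdsWithin measurableSet_Ioi a)
      ((hg a ht).mono Ioi_subset_Ici_self)
  · exact (intervalIntegral.integral_hasDerivAt_right hint
      ((hg.mono Ioi_subset_Ici_self).stronglyMeasurableAtFilter isOpen_Ioi t hat)
      ((hg t ht).continuousAt (Ici_mem_nhds hat))).hasDerivWithinAt

theorem antitoneOn_mul_exp_exp_neg_div {D : Set ℝ} (hD : Convex ℝ D) {F ε ε' : ℝ → ℝ} {ξ : ℝ}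
    (hξ : 0 < ξ) (hF : ∀ t ∈ D, HasDerivWithinAt F (exp (-ε t)) D t)
    (hε : ∀ t ∈ D, HasDerivWithinAt ε (ε' t) D t) (h : ∀ t ∈ D, ξ ≤ ε' t * F t) :
    AntitoneOn (fun t => F t * exp (exp (-ε t) / ξ)) D := by
  have hH : ∀ t ∈ D, HasDerivWithinAt (fun t => F t * exp (exp (-ε t) / ξ))
      (exp (-ε t) * exp (exp (-ε t) / ξ) * (1 - ε' t * F t / ξ)) D t := by
    intro t ht
    exact ((hF t ht).fun_mul ((hε t ht).fun_neg.exp.div_const ξ).exp).congr_deriv (by ring)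
  refine antitoneOn_of_hasDerivWithinAt_nonpos hD
    (fun t ht => (hH t ht).continuousWithinAt)
    (fun t ht => (hH t (interior_subset ht)).mono interior_subset) fun t ht => ?_
  have : 1 ≤ ε' t * F t / ξ := (one_le_div₀ hξ).mpr (h t (interior_subset ht))
  exact mul_nonpos_of_nonneg_of_nonpos (by positivity) (by linarith)

theorem le_mul_exp_exp_neg_div {D : Set ℝ} (hD : Convex ℝ D) {F ε ε' : ℝ → ℝ} {ξ : ℝ}
    (hξ : 0 < ξ) (hF : ∀ t ∈ D, HasDerivWithinAt F (exp (-ε t)) D t)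
    (hε : ∀ t ∈ D, HasDerivWithinAt ε (ε' t) D t) (h : ∀ t ∈ D, ξ ≤ ε' t * F t)
    {a t : ℝ} (ha : a ∈ D) (ht : t ∈ D) (hat : a ≤ t) (hFt : 0 ≤ F t) :
    F t ≤ F a * exp (exp (-ε a) / ξ) :=
  calc F t ≤ F t * exp (exp (-ε t) / ξ) :=
        le_mul_of_one_le_right hFt (one_le_exp (by positivity))
    _ ≤ F a * exp (exp (-ε a) / ξ) := antitoneOn_mul_exp_exp_neg_div hD hξ hF hε h ha ht hat

theorem stmt_5_general (mu ξ ρ : ℝ) (hmu : 0 < mu) (hξ : 0 < ξ)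
    (ε ε' : ℝ → ℝ)
    (hderiv : ∀ t ∈ Set.Ici (0 : ℝ), HasDerivWithinAt ε (ε' t) (Set.Ici 0) t)
    (hineq : ∀ t ∈ Set.Ici (0 : ℝ),
      ξ ≤ ε' t * (1 / mu + ∫ z in (0 : ℝ)..t, Real.exp (-(ε z))) ∧
        ε' t * (1 / mu + ∫ z in (0 : ℝ)..t, Real.exp (-(ε z))) ≤ ρ) :
    ∃ c : ℝ, 0 < c ∧ ∀ t ∈ Set.Ici (0 : ℝ), c ≤ ε' t := by
  set F : ℝ → ℝ := fun t => 1 / mu + ∫ z in (0 : ℝ)..t, exp (-ε z)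
  have hF : ∀ t ∈ Ici (0 : ℝ), HasDerivWithinAt F (exp (-ε t)) (Ici 0) t := fun t ht =>
    (hasDerivWithinAt_integral_Ici (fun s hs => (hderiv s hs).continuousWithinAt.neg.rexp)
      ht).const_add _
  have hF_pos : ∀ t ∈ Ici (0 : ℝ), 0 < F t := fun t ht =>
    add_pos_of_pos_of_nonneg (by positivity)
      (intervalIntegral.integral_nonneg ht fun _ _ => (exp_pos _).le)
  have hF_le : ∀ t ∈ Ici (0 : ℝ), F t ≤ F 0 * exp (exp (-ε 0) / ξ) := fun t ht =>
    le_mul_exp_exp_neg_div (convex_Ici 0) hξ hF hderiv (fun s hs => (hineq s hs).1)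
      self_mem_Ici ht ht (hF_pos t ht).le
  refine ⟨ξ / (F 0 * exp (exp (-ε 0) / ξ)), by positivity [hF_pos 0 self_mem_Ici], fun t ht => ?_⟩
  calc ξ / (F 0 * exp (exp (-ε 0) / ξ)) ≤ ξ / F t :=
        div_le_div_of_nonneg_left hξ.le (hF_pos t ht) (hF_le t ht)
    _ ≤ ε' t := (div_le_iff₀ (hF_pos t ht)).mpr (hineq t ht).1

/-- Let `μ > 0` and `0 < ξ ≤ ρ`. If `ε` is differentiable on
`[0,∞)` with `ε 0 = 0`, derivative `ε'` positive and nonincreasing, and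
`ξ ≤ ε' t * (1/μ + ∫_0^t exp (-(ε z)) dz) ≤ ρ` for all `t ≥ 0`, then
`inf_{t ≥ 0} ε' t > 0`. -/
theorem stmt_5 (mu ξ ρ : ℝ) (hmu : 0 < mu) (hξ : 0 < ξ) (hξρ : ξ ≤ ρ)
    (ε ε' : ℝ → ℝ)
    (hderiv : ∀ t ∈ Set.Ici (0 : ℝ), HasDerivWithinAt ε (ε' t) (Set.Ici 0) t)
    (hε0 : ε 0 = 0)
    (hpos : ∀ t ∈ Set.Ici (0 : ℝ), 0 < ε' t)
    (hanti : AntitoneOn ε' (Set.Ici 0))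
    (hineq : ∀ t ∈ Set.Ici (0 : ℝ),
      ξ ≤ ε' t * (1 / mu + ∫ z in (0 : ℝ)..t, Real.exp (-(ε z))) ∧
        ε' t * (1 / mu + ∫ z in (0 : ℝ)..t, Real.exp (-(ε z))) ≤ ρ) :
    ∃ c : ℝ, 0 < c ∧ ∀ t ∈ Set.Ici (0 : ℝ), c ≤ ε' t :=
  stmt_5_general mu ξ ρ hmu hξ ε ε' hderiv hineq
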